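/- If at iteration i of the simplified auction algorithm, u_0 ∈ U is a free vertex with n_{u_0} ⊆ D_l(i), then every augmenting path of M(i) starting at u_0 has length at least 2l+1. -/

import Mathlib

/-! Values never decrease and are raised only on the vertex just matched, at a minimum over its
bidder's neighbours; so a matched `v` has value at most one more than any neighbour of its
partner. Along an augmenting path the value therefore drops by at most one per matched edge,
from at least `l` at `v 0` to `0` at the free end `v m`. -/


/-- A trace of the simplified auction algorithm on a bipartite graph with
parts `U`, `V` and edge set `E`.  `M i` is the partial matching and `h i` the
vector of vertex values at iteration `i`.  At each iteration, either all
persons are assigned (termination: nothing changes), or some free vertex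
`u ∈ U` bids on a neighbor `j` of minimal value, `(u, j)` is added to the
matching (unmatching `j`'s previous partner), and `h j` is incremented. -/
structure AuctionTrace (U V : Type*) (E : Set (U × V)) where
  M : ℕ → Set (U × V)
  h : ℕ → V → ℕ
  h_init : ∀ v, h 0 v = 0
  M_init : M 0 = ∅
  M_subset : ∀ i, M i ⊆ E
  step : ∀ i,
    ((∀ u, ∃ v, (u, v) ∈ M i) ∧ M (i + 1) = M i ∧ h (i + 1) = h i) ∨
    (∃ u j, (∀ v, (u, v) ∉ M i) ∧ (u, j) ∈ E ∧
      (∀ w, (u, w) ∈ E → h i j ≤ h i w) ∧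
      M (i + 1) = insert (u, j) {e ∈ M i | e.2 ≠ j} ∧
      h (i + 1) j = h i j + 1 ∧ ∀ w, w ≠ j → h (i + 1) w = h i w)


/-- `M` is a matching: edges are pairwise vertex-disjoint. -/
def IsMatching {U V : Type*} (M : Set (U × V)) : Prop :=
  (∀ u v v', (u, v) ∈ M → (u, v') ∈ M → v = v') ∧
  (∀ u u' v, (u, v) ∈ M → (u', v) ∈ M → u = u')

/-- An augmenting path of length `2 * m + 1` with respect to the matching `M`
in the bipartite graph with edges `E`: vertices
`u 0, v 0, u 1, v 1, …, u m, v m`, where each `(u i, v i)` is a non-matching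
edge, each `(u (i+1), v i)` is a matching edge, the start `u 0 ∈ U` and the
end `v m ∈ V` are free, and the vertices are pairwise distinct. -/
def IsAugPath {U V : Type*} (E M : Set (U × V)) (u : ℕ → U) (v : ℕ → V)
    (m : ℕ) : Prop :=
  (∀ w, (u 0, w) ∉ M) ∧ (∀ w, (w, v m) ∉ M) ∧
  (∀ i ≤ m, (u i, v i) ∈ E ∧ (u i, v i) ∉ M) ∧
  (∀ i < m, (u (i + 1), v i) ∈ M) ∧
  (∀ i j, i ≤ m → j ≤ m → u i = u j → i = j) ∧
  (∀ i j, i ≤ m → j ≤ m → v i = v j → i = j)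


/-- The paper's invariant: `v ∈ D_l` and `(u, v) ∈ M` imply `n_u ⊆ D_{l-1}`. -/
def MatchedValueBound {U V : Type*} (E M : Set (U × V)) (h : V → ℕ) : Prop :=
  ∀ a b w, (a, b) ∈ M → (a, w) ∈ E → h b ≤ h w + 1

namespace AuctionTrace

variable {U V : Type*} {E : Set (U × V)} (t : AuctionTrace U V E)

theorem h_le_h_succ (i : ℕ) (w : V) : t.h i w ≤ t.h (i + 1) w := by
  rcases t.step i with ⟨_, _, hh⟩ | ⟨_, j, _, _, _, _, hhj, hhw⟩
  · rw [hh]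
  · by_cases hwj : w = j
    · subst hwj; omega
    · rw [hhw w hwj]

theorem h_eq_zero_of_free (i : ℕ) (v : V) (hv : ∀ u, (u, v) ∉ t.M i) : t.h i v = 0 := by
  induction i generalizing v with
  | zero => exact t.h_init v
  | succ i ih =>
    rcases t.step i with ⟨_, hM, hh⟩ | ⟨u, j, _, _, _, hM, _, hhw⟩
    · rw [hh]
      exact ih v fun a ha => hv a (hM ▸ ha)
    · have hvj : v ≠ j := fun h => hv u (by rw [hM, h]; exact Set.mem_insert _ _)
      rw [hhw v hvj]
      exact ih v fun a ha => hv a (by rw [hM]; exact Set.mem_insert_of_mem _ ⟨ha, hvj⟩)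

theorem matchedValueBound (i : ℕ) : MatchedValueBound E (t.M i) (t.h i) := by
  induction i with
  | zero => intro a b w hab; simp [t.M_init] at hab
  | succ i ih =>
    intro a b w hab haw
    have hw := t.h_le_h_succ i w
    rcases t.step i with ⟨_, hM, hh⟩ | ⟨u, j, _, _, hmin, hM, hhj, hhw⟩
    · rw [hh]
      exact ih a b w (hM ▸ hab) haw
    · rw [hM] at hab
      rcases hab with hab | ⟨hab, hbj⟩
      · obtain ⟨rfl, rfl⟩ := Prod.mk.inj hab
        have := hmin w haw
        omega
      · have := ih a b w hab haw
        rw [hhw b hbj]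
        omega

end AuctionTrace

theorem IsAugPath.h_le_h_add {U V : Type*} {E M : Set (U × V)} {h : V → ℕ}
    (hbound : MatchedValueBound E M h) {u : ℕ → U} {v : ℕ → V} {m : ℕ}
    (hp : IsAugPath E M u v m) {k : ℕ} (hk : k ≤ m) : h (v 0) ≤ h (v k) + k := by
  induction k with
  | zero => rfl
  | succ k ih =>
    have := hbound _ _ _ (hp.2.2.2.1 k hk) (hp.2.2.1 (k + 1) hk).1
    have := ih (by omega)
    omega

theorem augPath_length_ge_general {U V : Type*} (E : Set (U × V))
    (t : AuctionTrace U V E) (i l : ℕ) (u0 : U)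
    (hn : ∀ w, (u0, w) ∈ E → l ≤ t.h i w) :
    ∀ (u : ℕ → U) (v : ℕ → V) (m : ℕ),
      IsAugPath E (t.M i) u v m → u 0 = u0 → l ≤ m := by
  rintro u v m hp rfl
  have hstart : l ≤ t.h i (v 0) := hn (v 0) (hp.2.2.1 0 (Nat.zero_le m)).1
  have hend : t.h i (v m) = 0 := t.h_eq_zero_of_free i (v m) hp.2.1
  have := hp.h_le_h_add (t.matchedValueBound i) le_rfl
  omega

/-- If at iteration `i` of the simplified auction algorithm
`u₀ ∈ U` is a free vertex with `n_{u₀} ⊆ D_l(i)`, then every augmenting path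
of `M i` starting at `u₀` has length at least `2 l + 1` (in our encoding an
augmenting path with parameter `m` has length `2 m + 1`, so the claim is
`l ≤ m`). -/
theorem augPath_length_ge {U V : Type*} (E : Set (U × V))
    (t : AuctionTrace U V E) (i l : ℕ) (u0 : U)
    (hfree : ∀ v, (u0, v) ∉ t.M i)
    (hn : ∀ w, (u0, w) ∈ E → l ≤ t.h i w) :
    ∀ (u : ℕ → U) (v : ℕ → V) (m : ℕ),
      IsAugPath E (t.M i) u v m → u 0 = u0 → l ≤ m :=
  augPath_length_ge_general E t i l u0 hn
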